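/- arXiv:1601.03229 — 2 statements merged into one kernel-verified Lean document; each statement's English description precedes it below -/
import Mathlib

section
/- Define ρ(x) = ln( Pr[x + Lap(λ) > θ] / Pr[x - 1 + Lap(λ) > θ] ) and ρ⊤(x) = 1/λ for x < θ + 1, and ρ⊤(x) = (1/λ)·exp((θ + 1 - x)/λ) for x ≥ θ + 1. Then ρ(x) ≤ ρ⊤(x) for all real x. -/
/-!
The tail has a closed form: `e^{-t/λ}/2` for `t ≥ 0` and `1 - e^{t/λ}/2` for `t ≤ 0`.
With `t = θ - x`, the claim becomes an elementary inequality between exponentials in each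
of the regimes `t ≥ 0` (where `ρ = 1/λ` exactly), `-1 ≤ t ≤ 0` and `t ≤ -1`.
-/

open Real MeasureTheory

/-- Pr[Lap(l) > t] for the Laplace distribution with scale l,
density (1/(2l))·exp(-|y|/l). -/
noncomputable def lapTail (l t : ℝ) : ℝ :=
  ∫ y in Set.Ioi t, (1 / (2 * l)) * Real.exp (-|y| / l)

/-- Pr[Lap(l) ≤ t]. -/
noncomputable def lapCDF (l t : ℝ) : ℝ :=
  ∫ y in Set.Iic t, (1 / (2 * l)) * Real.exp (-|y| / l)

/-- The upper bound ρ⊤. -/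
noncomputable def rhoTop (l θ x : ℝ) : ℝ :=
  if x < θ + 1 then 1 / l else (1 / l) * Real.exp ((θ + 1 - x) / l)

lemma integral_Ioi_exp_neg_div {l : ℝ} (hl : 0 < l) (t : ℝ) :
    ∫ y in Set.Ioi t, exp (-(y / l)) = l * exp (-(t / l)) := by
  have h := integral_comp_mul_left_Ioi (fun u => exp (-u)) t (inv_pos.2 hl)
  simp only [smul_eq_mul, inv_inv, inv_mul_eq_div] at h
  rw [h, integral_exp_neg_Ioi]

lemma integrableOn_laplaceDensity {l : ℝ} (hl : 0 < l) (t : ℝ) :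
    IntegrableOn (fun y => 1 / (2 * l) * exp (-|y| / l)) (Set.Ioi t) := by
  have hmaj : IntegrableOn (fun y => 1 / (2 * l) * exp (-l⁻¹ * y)) (Set.Ioi t) :=
    (exp_neg_integrableOn_Ioi t (inv_pos.2 hl)).const_mul _
  refine hmaj.mono' (by fun_prop) (Filter.Eventually.of_forall fun y => ?_)
  rw [Real.norm_of_nonneg (by positivity)]
  gcongr
  rw [neg_mul, inv_mul_eq_div, neg_div]
  gcongr
  exact le_abs_self y

lemma lapTail_of_nonneg {l t : ℝ} (hl : 0 < l) (ht : 0 ≤ t) :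
    lapTail l t = exp (-(t / l)) / 2 := by
  have hdensity : Set.EqOn (fun y => 1 / (2 * l) * exp (-|y| / l))
      (fun y => 1 / (2 * l) * exp (-(y / l))) (Set.Ioi t) := fun y hy => by
    simp only [abs_of_pos (ht.trans_lt hy), neg_div]
  rw [lapTail, setIntegral_congr_fun measurableSet_Ioi hdensity, integral_const_mul,
    integral_Ioi_exp_neg_div hl]
  field_simp

lemma lapTail_of_nonpos {l t : ℝ} (hl : 0 < l) (ht : t ≤ 0) :
    lapTail l t = 1 - exp (t / l) / 2 := by
  have hsplit : Set.Ioc t 0 ∪ Set.Ioi 0 = Set.Ioi t := Set.Ioc_union_Ioi_eq_Ioi ht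
  have hint := integrableOn_laplaceDensity hl t
  have hdensity : Set.EqOn (fun y => 1 / (2 * l) * exp (-|y| / l))
      (fun y => 1 / (2 * l) * exp (y / l)) (Set.Ioc t 0) := fun y hy => by
    simp only [abs_of_nonpos hy.2, neg_neg]
  have hnegative : ∫ y in Set.Ioc t 0, 1 / (2 * l) * exp (-|y| / l)
      = (1 - exp (t / l)) / 2 := by
    rw [setIntegral_congr_fun measurableSet_Ioc hdensity,
      ← intervalIntegral.integral_of_le ht, intervalIntegral.integral_const_mul,
      intervalIntegral.integral_comp_div exp hl.ne', integral_exp]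
    field_simp
    simp
  rw [lapTail, ← hsplit, setIntegral_union (Set.Ioc_disjoint_Ioi le_rfl) measurableSet_Ioi
    (hint.mono_set (hsplit ▸ Set.subset_union_left))
    (hint.mono_set (hsplit ▸ Set.subset_union_right)), hnegative,
    ← lapTail, lapTail_of_nonneg hl le_rfl]
  simp only [zero_div, neg_zero, exp_zero]
  ring

lemma lapTail_pos {l : ℝ} (hl : 0 < l) (t : ℝ) : 0 < lapTail l t := by
  rcases le_or_gt 0 t with ht | ht
  · rw [lapTail_of_nonneg hl ht]
    positivity
  · rw [lapTail_of_nonpos hl ht.le]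
    have : exp (t / l) ≤ 1 := exp_le_one_iff.2 (div_nonpos_of_nonpos_of_nonneg ht.le hl.le)
    linarith

lemma log_lapTail_div_lapTail_add_one_le {l t : ℝ} (hl : 0 < l) (ht : -1 ≤ t) :
    log (lapTail l t / lapTail l (t + 1)) ≤ 1 / l := by
  rw [log_le_iff_le_exp (div_pos (lapTail_pos hl t) (lapTail_pos hl _)),
    div_le_iff₀ (lapTail_pos hl _), lapTail_of_nonneg (t := t + 1) hl (by linarith)]
  have hshift : exp (1 / l) * (exp (-((t + 1) / l)) / 2) = exp (-(t / l)) / 2 := by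
    rw [mul_div_assoc', ← exp_add]
    congr 2
    ring
  rw [hshift]
  rcases le_or_gt 0 t with ht0 | ht0
  · rw [lapTail_of_nonneg hl ht0]
  · -- with `u = exp (t / l)` this is `u (1 - u / 2) ≤ 1 / 2`, i.e. `(u - 1)² ≥ 0`
    rw [lapTail_of_nonpos hl ht0.le, exp_neg]
    have hu := exp_pos (t / l)
    rw [le_div_iff₀ two_pos, ← one_div, le_div_iff₀ hu]
    nlinarith [sq_nonneg (exp (t / l) - 1)]

lemma log_lapTail_div_lapTail_add_one_le_of_add_one_nonpos {l t : ℝ} (hl : 0 < l)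
    (ht : t + 1 ≤ 0) :
    log (lapTail l t / lapTail l (t + 1)) ≤ 1 / l * exp ((t + 1) / l) := by
  rw [lapTail_of_nonpos hl (by linarith), lapTail_of_nonpos hl ht]
  set v := exp ((t + 1) / l)
  set w := exp (-(1 / l))
  have hv : 0 < v := exp_pos _
  have hv1 : v ≤ 1 := exp_le_one_iff.2 (div_nonpos_of_nonpos_of_nonneg ht hl.le)
  have hw : 0 < w := exp_pos _
  have hw1 : w ≤ 1 := exp_le_one_iff.2 (neg_nonpos.2 (by positivity))
  have hw_ge : 1 - 1 / l ≤ w := by linarith [add_one_le_exp (-(1 / l))]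
  have hvw : exp (t / l) = v * w := by
    rw [← exp_add]
    congr 1
    ring
  rw [hvw]
  have hden : 0 < 1 - v / 2 := by linarith
  -- `log q ≤ q - 1`, and `q - 1 = v (1 - w) / (2 - v) ≤ v (1 - w) ≤ v / l`
  refine (log_le_sub_one_of_pos (div_pos (by nlinarith) hden)).trans ?_
  rw [div_sub_one hden.ne', div_le_iff₀ hden]
  nlinarith [mul_nonneg (mul_nonneg (one_div_pos.2 hl).le hv.le) (sub_nonneg.2 hv1),
    mul_nonneg hv.le (sub_nonneg.2 hw_ge)]

/-- ρ(x) ≤ ρ⊤(x) for all x. -/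
theorem stmt2 (l θ : ℝ) (hl : 0 < l) :
    ∀ x : ℝ, Real.log (lapTail l (θ - x) / lapTail l (θ - (x - 1))) ≤ rhoTop l θ x := by
  intro x
  rw [show θ - (x - 1) = θ - x + 1 by ring, rhoTop]
  split_ifs with hx
  · exact log_lapTail_div_lapTail_add_one_le hl (by linarith)
  · rw [show θ + 1 - x = θ - x + 1 by ring]
    exact log_lapTail_div_lapTail_add_one_le_of_add_one_nonpos hl (by linarith)
end

section
/- Let λ > 0, t ≥ 1 an integer, and for each i let qᵢ, qᵢ' be reals with qᵢ' ≤ qᵢ ≤ qᵢ' + 1 (counting queries on neighboring datasets where the first dataset has one more tuple). Let f(x) = Pr[Lap(tλ) > x] and g(x) = Pr[Lap(tλ) ≤ x]. For any finite index sets I (|I| ≤ t) and O: ∫ h(x)·∏_{i∈I} f(x - qᵢ)·∏_{j∈O} g(x - qⱼ) dx ≤ e^{1/λ} · ∫ h(x)·∏_{i∈I} f(x - qᵢ')·∏_{j∈O} g(x - qⱼ') dx, where h is the density of θ + Lap(λ). Hence the improved SVT (single noisy threshold with scale λ, query noise scale tλ) satisfies ε-differential privacy when λ ≥ 2/ε in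 this direction of neighboring datasets. -/
/-!
Conditioned on the noisy threshold `x`, the two integrands compare pointwise. Lowering `qⱼ` to
`qⱼ'` can only raise `Pr[Lap(tλ) ≤ x - qⱼ]`, and raising `x - qᵢ` by at most 1 lowers
`Pr[Lap(tλ) > x - qᵢ]` by at most the factor `e^{1/(tλ)}`, because the Laplace density of scale
`tλ` changes by at most that factor under a shift by 1. With at most `t` such factors the total
loss is `e^{1/λ}`, and integrating against the threshold density keeps the inequality.
-/

open Real MeasureTheory

open Set

noncomputable def lapDens (l y : ℝ) : ℝ := 1 / (2 * l) * exp (-|y| / l)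

section Laplace

variable {l : ℝ}

theorem integral_exp_neg_abs : ∫ y : ℝ, exp (-|y|) = 2 := by
  rw [integral_comp_abs (f := fun y => exp (-y)), integral_exp_neg_Ioi_zero, mul_one]

theorem integral_lapDens (hl : 0 < l) : ∫ y, lapDens l y = 1 := by
  have h_scaled : ∫ y : ℝ, exp (-|y / l|) = l * 2 := by
    rw [Measure.integral_comp_div (fun y => exp (-|y|)), integral_exp_neg_abs, abs_of_pos hl,
      smul_eq_mul]
  simp only [abs_div, abs_of_pos hl] at h_scaled
  simp only [lapDens, integral_const_mul, neg_div, h_scaled]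
  field_simp

theorem integrable_lapDens (hl : 0 < l) : Integrable (lapDens l) :=
  Integrable.of_integral_ne_zero (by rw [integral_lapDens hl]; exact one_ne_zero)

theorem lapDens_nonneg (hl : 0 ≤ l) (y : ℝ) : 0 ≤ lapDens l y := by
  unfold lapDens; positivity

theorem lapDens_sub_le (hl : 0 < l) (y c : ℝ) :
    lapDens l (y - c) ≤ exp (|c| / l) * lapDens l y := by
  have h_exp : -|y - c| / l ≤ |c| / l + -|y| / l := by
    rw [← add_div, div_le_div_iff_of_pos_right hl]
    linarith [abs_sub_abs_le_abs_sub y c, abs_sub_comm y c]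
  calc lapDens l (y - c) ≤ 1 / (2 * l) * exp (|c| / l + -|y| / l) := by
        unfold lapDens; gcongr
    _ = exp (|c| / l) * lapDens l y := by rw [lapDens, exp_add]; ring

theorem lapTail_eq_setIntegral_lapDens (a : ℝ) : lapTail l a = ∫ y in Ioi a, lapDens l y := rfl

theorem lapTail_nonneg (hl : 0 ≤ l) (a : ℝ) : 0 ≤ lapTail l a :=
  setIntegral_nonneg measurableSet_Ioi fun y _ => lapDens_nonneg hl y

theorem lapCDF_nonneg (hl : 0 ≤ l) (a : ℝ) : 0 ≤ lapCDF l a :=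
  setIntegral_nonneg measurableSet_Iic fun y _ => lapDens_nonneg hl y

theorem lapTail_le_one (hl : 0 < l) (a : ℝ) : lapTail l a ≤ 1 :=
  integral_lapDens hl ▸ setIntegral_le_integral (integrable_lapDens hl)
    (.of_forall (lapDens_nonneg hl.le))

theorem lapCDF_le_one (hl : 0 < l) (a : ℝ) : lapCDF l a ≤ 1 :=
  integral_lapDens hl ▸ setIntegral_le_integral (integrable_lapDens hl)
    (.of_forall (lapDens_nonneg hl.le))

theorem lapTail_antitone (hl : 0 < l) : Antitone (lapTail l) := fun _ _ hab =>
  setIntegral_mono_set (integrable_lapDens hl).integrableOn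
    (.of_forall (lapDens_nonneg hl.le)) (Ioi_subset_Ioi hab).eventuallyLE

theorem lapCDF_monotone (hl : 0 < l) : Monotone (lapCDF l) := fun _ _ hab =>
  setIntegral_mono_set (integrable_lapDens hl).integrableOn
    (.of_forall (lapDens_nonneg hl.le)) (Iic_subset_Iic.2 hab).eventuallyLE

theorem lapTail_sub_le (hl : 0 < l) (a c : ℝ) :
    lapTail l (a - c) ≤ exp (|c| / l) * lapTail l a := by
  have h_shift : lapTail l (a - c) = ∫ y in Ioi a, lapDens l (y - c) := by
    have h_translate := (measurePreserving_sub_right volume c).setIntegral_preimage_emb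
      (measurableEmbedding_subRight c) (lapDens l) (Ioi (a - c))
    rw [preimage_sub_const_Ioi, sub_add_cancel] at h_translate
    exact h_translate.symm
  rw [h_shift, lapTail_eq_setIntegral_lapDens, ← integral_const_mul]
  exact setIntegral_mono_on ((integrable_lapDens hl).comp_sub_right c).integrableOn
    ((integrable_lapDens hl).const_mul _).integrableOn measurableSet_Ioi
    fun y _ => lapDens_sub_le hl y c

end Laplace

/-- Given the noisy threshold `x`, the probability that the noisy answers (noise `Lap(L)`) to the
queries in `I` exceed `x` and those to the queries in `O` do not. -/
noncomputable def svtOutputProb {ι : Type*} (L : ℝ) (q : ι → ℝ) (I O : Finset ι) (x : ℝ) : ℝ :=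
  (∏ i ∈ I, lapTail L (x - q i)) * ∏ j ∈ O, lapCDF L (x - q j)

section SVT

variable {ι : Type*} {L : ℝ} {q q' : ι → ℝ} {I O : Finset ι}

theorem svtOutputProb_nonneg (hL : 0 ≤ L) (x : ℝ) : 0 ≤ svtOutputProb L q I O x :=
  mul_nonneg (Finset.prod_nonneg fun _ _ => lapTail_nonneg hL _)
    (Finset.prod_nonneg fun _ _ => lapCDF_nonneg hL _)

theorem svtOutputProb_le_one (hL : 0 < L) (x : ℝ) : svtOutputProb L q I O x ≤ 1 :=
  mul_le_one₀ (Finset.prod_le_one (fun _ _ => lapTail_nonneg hL.le _)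
      fun _ _ => lapTail_le_one hL _)
    (Finset.prod_nonneg fun _ _ => lapCDF_nonneg hL.le _)
    (Finset.prod_le_one (fun _ _ => lapCDF_nonneg hL.le _) fun _ _ => lapCDF_le_one hL _)

theorem measurable_svtOutputProb (hL : 0 < L) : Measurable (svtOutputProb L q I O) :=
  (Finset.measurable_prod I fun i _ =>
      (lapTail_antitone hL).measurable.comp (measurable_id.sub_const (q i))).mul
    (Finset.measurable_prod O fun j _ =>
      (lapCDF_monotone hL).measurable.comp (measurable_id.sub_const (q j)))

theorem prod_lapTail_sub_le (hL : 0 < L) (hq : ∀ i ∈ I, q i ≤ q' i + 1) (x : ℝ) :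
    ∏ i ∈ I, lapTail L (x - q i) ≤ exp (I.card / L) * ∏ i ∈ I, lapTail L (x - q' i) := by
  calc ∏ i ∈ I, lapTail L (x - q i)
      ≤ ∏ i ∈ I, exp (1 / L) * lapTail L (x - q' i) := by
        refine Finset.prod_le_prod (fun _ _ => lapTail_nonneg hL.le _) fun i hi => ?_
        calc lapTail L (x - q i) ≤ lapTail L (x - q' i - 1) :=
              lapTail_antitone hL (by linarith [hq i hi])
          _ ≤ exp (1 / L) * lapTail L (x - q' i) := by
              simpa only [abs_one] using lapTail_sub_le hL (x - q' i) 1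
    _ = exp (I.card / L) * ∏ i ∈ I, lapTail L (x - q' i) := by
        rw [Finset.prod_mul_distrib, Finset.prod_const, ← exp_nat_mul, mul_one_div]

theorem prod_lapCDF_sub_le (hL : 0 < L) (hq : ∀ j ∈ O, q' j ≤ q j) (x : ℝ) :
    ∏ j ∈ O, lapCDF L (x - q j) ≤ ∏ j ∈ O, lapCDF L (x - q' j) :=
  Finset.prod_le_prod (fun _ _ => lapCDF_nonneg hL.le _) fun j hj =>
    lapCDF_monotone hL (by linarith [hq j hj])

theorem svtOutputProb_le (hL : 0 < L) (hI : ∀ i ∈ I, q i ≤ q' i + 1)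
    (hO : ∀ j ∈ O, q' j ≤ q j) (x : ℝ) :
    svtOutputProb L q I O x ≤ exp (I.card / L) * svtOutputProb L q' I O x := by
  rw [svtOutputProb, svtOutputProb, ← mul_assoc]
  exact mul_le_mul (prod_lapTail_sub_le hL hI x) (prod_lapCDF_sub_le hL hO x)
    (Finset.prod_nonneg fun _ _ => lapCDF_nonneg hL.le _)
    (mul_nonneg (exp_pos _).le (Finset.prod_nonneg fun _ _ => lapTail_nonneg hL.le _))

theorem integral_mul_svtOutputProb_le {h : ℝ → ℝ} (h_int : Integrable h) (h_nonneg : 0 ≤ h)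
    (hL : 0 < L) (hI : ∀ i ∈ I, q i ≤ q' i + 1) (hO : ∀ j ∈ O, q' j ≤ q j) :
    ∫ x, h x * svtOutputProb L q I O x ≤
      exp (I.card / L) * ∫ x, h x * svtOutputProb L q' I O x := by
  have h_int' : Integrable fun x => h x * svtOutputProb L q' I O x :=
    h_int.mul_bdd (measurable_svtOutputProb hL).aestronglyMeasurable (.of_forall fun x => by
      rw [Real.norm_eq_abs, abs_of_nonneg (svtOutputProb_nonneg hL.le x)]
      exact svtOutputProb_le_one hL x)
  rw [← integral_const_mul]
  refine integral_mono_of_nonneg (.of_forall fun x => ?_) (h_int'.const_mul _)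
    (.of_forall fun x => ?_)
  · exact mul_nonneg (h_nonneg x) (svtOutputProb_nonneg hL.le x)
  · calc h x * svtOutputProb L q I O x
        ≤ h x * (exp (I.card / L) * svtOutputProb L q' I O x) :=
          mul_le_mul_of_nonneg_left (svtOutputProb_le hL hI hO x) (h_nonneg x)
      _ = exp (I.card / L) * (h x * svtOutputProb L q' I O x) := by ring

end SVT

/-- privacy inequality for the improved SVT (one direction of
neighboring datasets). -/
theorem stmt14 (l θ : ℝ) (hl : 0 < l) (t : ℕ) (ht : 1 ≤ t)
    {ι : Type*} (q q' : ι → ℝ)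
    (hq : ∀ i, q' i ≤ q i ∧ q i ≤ q' i + 1)
    (I O : Finset ι) (hI : I.card ≤ t)
    (h : ℝ → ℝ) (hh : h = fun x => (1 / (2 * l)) * Real.exp (-|x - θ| / l)) :
    (∫ x : ℝ, h x * (∏ i ∈ I, lapTail ((t : ℝ) * l) (x - q i)) *
        (∏ j ∈ O, lapCDF ((t : ℝ) * l) (x - q j))) ≤
      Real.exp (1 / l) *
        ∫ x : ℝ, h x * (∏ i ∈ I, lapTail ((t : ℝ) * l) (x - q' i)) *
          (∏ j ∈ O, lapCDF ((t : ℝ) * l) (x - q' j)) := by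
  have ht_pos : (0 : ℝ) < t := by exact_mod_cast ht
  have hL : 0 < (t : ℝ) * l := mul_pos ht_pos hl
  have h_int : Integrable h := hh ▸ (integrable_lapDens hl).comp_sub_right θ
  have h_nonneg : 0 ≤ h := hh ▸ fun x => lapDens_nonneg hl.le (x - θ)
  have h_exp : exp (I.card / ((t : ℝ) * l)) ≤ exp (1 / l) := by
    rw [exp_le_exp, div_le_div_iff₀ hL hl, one_mul]
    exact mul_le_mul_of_nonneg_right (by exact_mod_cast hI) hl.le
  simp only [mul_assoc]
  calc ∫ x, h x * svtOutputProb (t * l) q I O x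
      ≤ exp (I.card / ((t : ℝ) * l)) * ∫ x, h x * svtOutputProb (t * l) q' I O x :=
        integral_mul_svtOutputProb_le h_int h_nonneg hL (fun i _ => (hq i).2)
          fun j _ => (hq j).1
    _ ≤ exp (1 / l) * ∫ x, h x * svtOutputProb (t * l) q' I O x := by
        gcongr
        exact integral_nonneg fun x => mul_nonneg (h_nonneg x) (svtOutputProb_nonneg hL.le x)
end
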